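/- Let p be an odd prime and let A = Z[S] be a polynomial ring over Z on a set S of variables. Define G̃(A) as the free abelian group on symbols V^n_a (n ≥ 0, 0 ≠ a ∈ A, with V^n_0 := 0), and H(A) ⊆ G̃(A) the subgroup generated by all elements (V^n_{(x+y)^p} − pV^{n-1}_{x+y}) − (V^n_{x^p} − pV^{n-1}_x) − (V^n_{y^p} − pV^{n-1}_y) and V^n_a + V^n_{-a}. Let η̃ : G̃(A) → X(A) ⊆ A^ℕ be the homomorphism V^n_a ↦ V^n⟨a⟩. Then the kernel of η̃ equals the p-saturation H̃(A) = {α ∈ G̃(A) : p^ℓ α ∈ H(A) for some ℓ ≥ 0}. -/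

import Mathlib

/-!
Write `w_n(x) = V^{n+1}_{x^p} - p V^n_x`. Then `η̃ (w_n x) = -V^n (p x, 0, 0, …)` is additive
in `x`, and `⟨-a⟩ = -⟨a⟩` because `p` is odd, so `η̃` kills `H(A)`; as `A^ℕ` is torsion free, it
kills the `p`-saturation too.

Conversely, induct on the largest level `N` of `α ∈ ker η̃`. The Frobenius-like map
`F : V^0_a ↦ V^0_{a^p}, V^{n+1}_a ↦ p V^n_a` satisfies `V F α - p α = ∑ c_a w_0(a)` over the
level-0 terms `c_a V^0_a` of `α`, and this lies in `H(A)` since `w_0` is additive modulo `H(A)` and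
`∑ c_a a = (η̃ α)_0 = 0`. Since `V` is injective on `A^ℕ`, `F α ∈ ker η̃`, and it has level `N - 1`,
so `p^N α ∈ H(A)`. At level `0` the relations `∑ c_a a^{p^k} = 0` are pushed to `ℤ` by a point
evaluation `φ` injective on the `±a` involved; grouping `a` with `-a` (for `φ a > 0`) and comparing
dominant terms of the integer sums `∑ (c_a - c_{-a}) (φ a)^{p^k}` gives `c_a = c_{-a}`, so `α` is a
combination of the relations `V^0_a + V^0_{-a}`.
-/

open scoped Classical

/-- The Teichmüller sequence `⟨a⟩ = (a, a^p, a^{p^2}, ...)` in `A^ℕ`. -/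
def teich (p : ℕ) {A : Type*} [CommRing A] (a : A) : ℕ → A := fun k => a ^ p ^ k

/-- The Verschiebung `V(r_0, r_1, ...) = p • (0, r_0, r_1, ...)` on `A^ℕ`. -/
def Vmap (p : ℕ) {A : Type*} [CommRing A] : (ℕ → A) → (ℕ → A) :=
  fun r k => match k with
  | 0 => 0
  | m + 1 => (p : A) * r m

/-- `G̃(A)`: the free abelian group on the symbols `V^n_a` for `n ≥ 0` and `0 ≠ a ∈ A`. -/
def Gt (A : Type*) [CommRing A] := FreeAbelianGroup (ℕ × {a : A // a ≠ 0})

noncomputable instance (A : Type*) [CommRing A] : AddCommGroup (Gt A) :=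
  inferInstanceAs (AddCommGroup (FreeAbelianGroup (ℕ × {a : A // a ≠ 0})))

/-- The symbol `V^n_a ∈ G̃(A)`, with the convention `V^n_0 := 0`. -/
noncomputable def gen {A : Type*} [CommRing A] (n : ℕ) (a : A) : Gt A :=
  if h : a = 0 then 0 else FreeAbelianGroup.of (n, ⟨a, h⟩)

/-- The subgroup `H(A) ⊆ G̃(A)` generated by the additivity relations for
`x ↦ V^n_{x^p} - p V^{n-1}_x` and by the relations `V^n_a + V^n_{-a}`. -/
noncomputable def HA (p : ℕ) (A : Type*) [CommRing A] : AddSubgroup (Gt A) :=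
  AddSubgroup.closure
    ({g | ∃ (n : ℕ) (x y : A),
        g = (gen (n + 1) ((x + y) ^ p) - p • gen n (x + y))
            - (gen (n + 1) (x ^ p) - p • gen n x)
            - (gen (n + 1) (y ^ p) - p • gen n y)} ∪
     {g | ∃ (n : ℕ) (a : A), g = gen n a + gen n (-a)})

/-- The homomorphism `η̃ : G̃(A) → A^ℕ`, `V^n_a ↦ V^n⟨a⟩` (its image lies in `X(A)`). -/
noncomputable def etaT (p : ℕ) (A : Type*) [CommRing A] : Gt A →+ (ℕ → A) :=
  FreeAbelianGroup.lift fun x : ℕ × {a : A // a ≠ 0} => (Vmap p)^[x.1] (teich p (x.2 : A))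

open Filter Topology

def SeparatedByIntPoints (A : Type*) [CommRing A] : Prop :=
  ∀ s : Finset A, ∃ φ : A →+* ℤ, Set.InjOn φ s

section SeparatedByIntPoints

variable {A : Type*} [CommRing A]

lemma SeparatedByIntPoints.isAddTorsionFree (hA : SeparatedByIntPoints A) :
    IsAddTorsionFree A where
  nsmul_right_injective n hn a b hab := by
    obtain ⟨φ, hφ⟩ := hA {a, b}
    refine hφ (by simp) (by simp) (nsmul_right_injective hn ?_)
    simpa only [map_nsmul] using congrArg φ hab

lemma MvPolynomial.separatedByIntPoints (σ : Type*) :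
    SeparatedByIntPoints (MvPolynomial σ ℤ) := by
  intro s
  have hP : ∏ x ∈ s.offDiag, (x.1 - x.2) ≠ 0 :=
    Finset.prod_ne_zero_iff.mpr fun x hx => sub_ne_zero.mpr (Finset.mem_offDiag.mp hx).2.2
  obtain ⟨v, hv⟩ : ∃ v : σ → ℤ, MvPolynomial.eval v (∏ x ∈ s.offDiag, (x.1 - x.2)) ≠ 0 := by
    by_contra! h
    exact hP (MvPolynomial.funext fun v => by rw [h v, map_zero])
  refine ⟨MvPolynomial.eval v, fun a ha b hb hab => by_contra fun hne => hv ?_⟩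
  rw [map_prod]
  exact Finset.prod_eq_zero (i := (a, b)) (Finset.mem_offDiag.mpr ⟨ha, hb, hne⟩)
    (by rw [map_sub, hab, sub_self])

lemma sum_eq_sum_filter_pos_add_neg {M : Type*} [AddCommMonoid M] (φ : A →+* ℤ) {T : Finset A}
    (hneg : ∀ a ∈ T, -a ∈ T) (hφ : Set.InjOn φ ↑(insert 0 T)) (g : A → M) (hg : g 0 = 0) :
    ∑ a ∈ T, g a = ∑ a ∈ T.filter (fun a => 0 < φ a), (g a + g (-a)) := by
  rw [Finset.sum_add_distrib, ← Finset.sum_filter_add_sum_filter_not T (fun a => 0 < φ a)]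
  congr 1
  have hzero : ∀ a ∈ T, φ a = 0 → a = 0 := fun a ha h =>
    hφ (Finset.mem_coe.2 (Finset.mem_insert_of_mem ha))
      (Finset.mem_coe.2 (Finset.mem_insert_self 0 T)) (by rw [h, map_zero])
  calc ∑ a ∈ T.filter (fun a => ¬ 0 < φ a), g a
      = ∑ a ∈ T.filter (fun a => φ a < 0), g a := by
        refine (Finset.sum_subset (fun a => ?_) fun a ha ha' => ?_).symm
        · simp only [Finset.mem_filter, not_lt]
          exact fun h => ⟨h.1, h.2.le⟩
        · simp only [Finset.mem_filter, not_lt, not_and] at ha ha'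
          rw [hzero a ha.1 (le_antisymm ha.2 (ha' ha.1)), hg]
    _ = ∑ a ∈ T.filter (fun a => 0 < φ a), g (-a) := by
        refine Finset.sum_nbij' (fun a => -a) (fun a => -a) ?_ ?_ (fun a _ => neg_neg a)
          (fun a _ => neg_neg a) (fun a _ => by rw [neg_neg])
        all_goals
          intro a ha
          simp only [Finset.mem_filter, map_neg] at ha ⊢
          exact ⟨hneg a ha.1, by omega⟩

end SeparatedByIntPoints

section IntegerPowers

lemma eventually_mul_pow_lt_pow {m M : ℤ} (hm : 0 ≤ m) (h : m < M) (C : ℤ) :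
    ∀ᶠ t : ℕ in atTop, C * m ^ t < M ^ t := by
  have hM : (0 : ℝ) < M := by exact_mod_cast hm.trans_lt h
  have hlim : Tendsto (fun t : ℕ => (C : ℝ) * ((m : ℝ) / M) ^ t) atTop (𝓝 0) := by
    simpa using (tendsto_pow_atTop_nhds_zero_of_lt_one (by positivity)
      ((div_lt_one hM).mpr (by exact_mod_cast h))).const_mul (C : ℝ)
  filter_upwards [hlim.eventually (gt_mem_nhds one_pos)] with t ht
  rw [div_pow, mul_div_assoc', div_lt_one (pow_pos hM t)] at ht
  exact_mod_cast ht

lemma eq_zero_of_frequently_mul_pow_add_sum_eq_zero {ι : Type*} (s : Finset ι) (c e : ι → ℤ)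
    {x M : ℤ} (hM : 0 < M) (he : ∀ i ∈ s, 0 ≤ e i ∧ e i < M)
    (h : ∃ᶠ t in atTop, x * M ^ t + ∑ i ∈ s, c i * e i ^ t = 0) : x = 0 := by
  set C := ∑ i ∈ s, |c i|
  have hbound : ∀ t : ℕ, |∑ i ∈ s, c i * e i ^ t| ≤ C * (M - 1) ^ t := fun t => by
    refine (Finset.abs_sum_le_sum_abs _ _).trans ?_
    rw [Finset.sum_mul]
    gcongr with i hi
    rw [abs_mul, abs_pow, abs_of_nonneg (he i hi).1]
    gcongr
    · exact (he i hi).1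
    · linarith [(he i hi).2]
  obtain ⟨t, ht, hlt⟩ :=
    (h.and_eventually (eventually_mul_pow_lt_pow (by omega) (by omega : M - 1 < M) C)).exists
  by_contra hx
  have h1 : M ^ t ≤ |x| * M ^ t := le_mul_of_one_le_left (by positivity) (Int.one_le_abs hx)
  have h2 : |x| * M ^ t = |∑ i ∈ s, c i * e i ^ t| := by
    rw [← abs_of_pos (pow_pos hM t), ← abs_mul, eq_neg_of_add_eq_zero_left ht, abs_neg]
  linarith [hbound t]

lemma eq_zero_of_frequently_sum_mul_pow_eq_zero {ι : Type*} [DecidableEq ι] (s : Finset ι)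
    (c e : ι → ℤ) (he : Set.InjOn e s) (hpos : ∀ i ∈ s, 0 < e i)
    (h : ∃ᶠ t in atTop, ∑ i ∈ s, c i * e i ^ t = 0) : ∀ i ∈ s, c i = 0 := by
  induction s using Finset.induction_on_max_value e with
  | empty => simp
  | insert a s ha hmax ih =>
    rw [Finset.coe_insert] at he
    simp only [Finset.sum_insert ha] at h
    have hlt : ∀ i ∈ s, 0 ≤ e i ∧ e i < e a := fun i hi =>
      ⟨(hpos i (Finset.mem_insert_of_mem hi)).le, (hmax i hi).lt_of_ne fun hia =>
        ha (he (Set.mem_insert_of_mem a hi) (Set.mem_insert a s) hia ▸ hi)⟩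
    have hca : c a = 0 := eq_zero_of_frequently_mul_pow_add_sum_eq_zero s c e
      (hpos a (Finset.mem_insert_self a s)) hlt h
    have hs := ih (he.mono (Set.subset_insert a s))
      (fun i hi => hpos i (Finset.mem_insert_of_mem hi))
      (by simpa only [hca, zero_mul, zero_add] using h)
    intro i hi
    rcases Finset.mem_insert.mp hi with rfl | hi
    exacts [hca, hs i hi]

end IntegerPowers

section Symbols

variable {A : Type*} [CommRing A]

@[simp] lemma gen_zero (n : ℕ) : gen n (0 : A) = 0 := dif_pos rfl

lemma gen_of_ne_zero {n : ℕ} {a : A} (ha : a ≠ 0) :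
    gen n a = FreeAbelianGroup.of (n, ⟨a, ha⟩) := dif_neg ha

lemma lift_gen {B : Type*} [AddCommGroup B] (φ : ℕ → A → B) (hφ : ∀ n, φ n 0 = 0)
    (n : ℕ) (a : A) :
    (FreeAbelianGroup.lift (fun x : ℕ × {a : A // a ≠ 0} => φ x.1 x.2) : Gt A →+ B) (gen n a)
      = φ n a := by
  by_cases ha : a = 0
  · rw [ha, gen_zero, hφ]
    exact map_zero _
  · rw [gen_of_ne_zero ha, FreeAbelianGroup.lift_apply_of]

lemma Gt.hom_ext {B : Type*} [AddCommGroup B] {f g : Gt A →+ B}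
    (h : ∀ n a, f (gen n a) = g (gen n a)) : f = g :=
  FreeAbelianGroup.lift_ext f g fun ⟨n, a, ha⟩ => by
    have h' := h n a
    rw [gen_of_ne_zero ha] at h'
    exact h'

variable (p : ℕ)

def VmapHom : AddMonoid.End (ℕ → A) where
  toFun := Vmap p
  map_zero' := by funext k; cases k <;> simp [Vmap]
  map_add' r s := by funext k; cases k <;> simp [Vmap, mul_add]

lemma coe_VmapHom_pow (n : ℕ) : ⇑(VmapHom p ^ n : AddMonoid.End (ℕ → A)) = (Vmap p)^[n] := rfl

lemma teich_zero (hp : p ≠ 0) : teich p (0 : A) = 0 := funext fun k => zero_pow (pow_ne_zero k hp)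

lemma teich_neg (hp : Odd p) (a : A) : teich p (-a) = -teich p a := funext fun _ => hp.pow.neg_pow a

lemma Vmap_teich_pow (x : A) :
    Vmap p (teich p (x ^ p)) = p • teich p x - Pi.single 0 (p • x) := by
  funext k; cases k <;> simp [Vmap, teich, ← pow_mul, pow_succ']

lemma etaT_gen (hp : p ≠ 0) (n : ℕ) (a : A) : etaT p A (gen n a) = (Vmap p)^[n] (teich p a) :=
  lift_gen (fun n a => (Vmap p)^[n] (teich p a))
    (fun n => by rw [teich_zero p hp]; exact Function.iterate_fixed (map_zero (VmapHom p)) n) n a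

lemma eq_zero_of_Vmap_eq_zero [IsAddTorsionFree A] (hp : p ≠ 0) {r : ℕ → A} (h : Vmap p r = 0) :
    r = 0 :=
  funext fun m => (nsmul_eq_zero_iff_right hp).mp <| by
    simpa [Vmap, nsmul_eq_mul] using congrFun h (m + 1)

noncomputable def wgen (n : ℕ) (x : A) : Gt A := gen (n + 1) (x ^ p) - p • gen n x

lemma wgen_add_sub_mem (n : ℕ) (x y : A) :
    wgen p n (x + y) - wgen p n x - wgen p n y ∈ HA p A :=
  AddSubgroup.subset_closure (Or.inl ⟨n, x, y, rfl⟩)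

lemma gen_add_gen_neg_mem (n : ℕ) (a : A) : gen n a + gen n (-a) ∈ HA p A :=
  AddSubgroup.subset_closure (Or.inr ⟨n, a, rfl⟩)

lemma etaT_wgen (hp : p ≠ 0) (n : ℕ) (x : A) :
    etaT p A (wgen p n x) = -(VmapHom p ^ n) (Pi.single 0 (p • x)) := by
  rw [wgen, map_sub, map_nsmul, etaT_gen p hp, etaT_gen p hp, Function.iterate_succ_apply,
    Vmap_teich_pow, ← coe_VmapHom_pow, map_sub, map_nsmul, sub_sub_cancel_left]

lemma etaT_gen_neg (hp : Odd p) (n : ℕ) (a : A) : etaT p A (gen n (-a)) = -etaT p A (gen n a) := by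
  rw [etaT_gen p hp.pos.ne', etaT_gen p hp.pos.ne', teich_neg p hp, ← coe_VmapHom_pow, map_neg]

lemma HA_le_ker (hp : Odd p) : HA p A ≤ (etaT p A).ker := by
  refine (AddSubgroup.closure_le _).mpr ?_
  rintro _ (⟨n, x, y, rfl⟩ | ⟨n, a, rfl⟩)
  · change wgen p n (x + y) - wgen p n x - wgen p n y ∈ (etaT p A).ker
    simp [etaT_wgen p hp.pos.ne', smul_add, Pi.single_add]
  · simp [etaT_gen_neg p hp]

end Symbols

section Descent

variable {A : Type*} [CommRing A] (p : ℕ)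

noncomputable def gtShift : Gt A →+ Gt A :=
  FreeAbelianGroup.lift fun x => gen (x.1 + 1) (x.2 : A)

lemma gtShift_gen (n : ℕ) (a : A) : gtShift (gen n a) = gen (n + 1) a :=
  lift_gen (fun n a => gen (n + 1) a) (fun _ => gen_zero _) n a

noncomputable def frobGen : ℕ → A → Gt A
  | 0, a => gen 0 (a ^ p)
  | n + 1, a => p • gen n a

noncomputable def gtFrob : Gt A →+ Gt A :=
  FreeAbelianGroup.lift fun x => frobGen p x.1 (x.2 : A)

lemma gtFrob_gen (hp : p ≠ 0) (n : ℕ) (a : A) : gtFrob p (gen n a) = frobGen p n a :=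
  lift_gen (frobGen p) (fun n => by cases n <;> simp [frobGen, zero_pow hp]) n a

lemma etaT_gtShift (hp : p ≠ 0) (α : Gt A) : etaT p A (gtShift α) = Vmap p (etaT p A α) := by
  have : (etaT p A).comp gtShift = (VmapHom p).comp (etaT p A) := Gt.hom_ext fun n a => by
    change etaT p A (gtShift (gen n a)) = VmapHom p (etaT p A (gen n a))
    rw [gtShift_gen, etaT_gen p hp, etaT_gen p hp, Function.iterate_succ_apply']
    rfl
  exact DFunLike.congr_fun this α

lemma gtShift_mem_HA {α : Gt A} (h : α ∈ HA p A) : gtShift α ∈ HA p A := by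
  suffices HA p A ≤ (HA p A).comap gtShift from this h
  refine (AddSubgroup.closure_le _).mpr ?_
  rintro _ (⟨n, x, y, rfl⟩ | ⟨n, a, rfl⟩) <;>
    simp only [SetLike.mem_coe, AddSubgroup.mem_comap, map_sub, map_add, map_nsmul, gtShift_gen]
  · exact AddSubgroup.subset_closure (Or.inl ⟨n + 1, x, y, rfl⟩)
  · exact AddSubgroup.subset_closure (Or.inr ⟨n + 1, a, rfl⟩)

noncomputable def wgenQuot (n : ℕ) : A →+ Gt A ⧸ HA p A :=
  AddMonoidHom.mk' (fun x => (wgen p n x : Gt A ⧸ HA p A)) fun x y => by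
    rw [← QuotientAddGroup.mk_add, QuotientAddGroup.eq_iff_sub_mem, ← sub_sub]
    exact wgen_add_sub_mem p n x y

lemma gtShift_gtFrob_sub_mem (hp : p ≠ 0) {α : Gt A} (hα : etaT p A α 0 = 0) :
    gtShift (gtFrob p α) - p • α ∈ HA p A := by
  have key :
      (QuotientAddGroup.mk' (HA p A)).comp (gtShift.comp (gtFrob p) - p • AddMonoidHom.id _)
      = (wgenQuot p 0).comp ((Pi.evalAddMonoidHom (fun _ => A) 0).comp (etaT p A)) :=
    Gt.hom_ext fun n a => by
      cases n with
      | zero => simp [gtFrob_gen p hp, frobGen, gtShift_gen, etaT_gen p hp, wgenQuot, wgen, teich]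
      | succ n => simp [gtFrob_gen p hp, frobGen, gtShift_gen, etaT_gen p hp,
          Function.iterate_succ_apply', Vmap]
  rw [← QuotientAddGroup.eq_zero_iff]
  simpa [hα] using DFunLike.congr_fun key α

end Descent

section Levels

variable {A : Type*} [CommRing A] (p : ℕ)

noncomputable def levelLE (N : ℕ) : AddSubgroup (Gt A) :=
  AddSubgroup.closure {x | ∃ n ≤ N, ∃ a : A, gen n a = x}

lemma gen_mem_levelLE {n N : ℕ} (h : n ≤ N) (a : A) : gen n a ∈ levelLE N :=
  AddSubgroup.subset_closure ⟨n, h, a, rfl⟩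

lemma levelLE_mono : Monotone (levelLE (A := A)) := fun _ _ h =>
  AddSubgroup.closure_mono fun _ ⟨n, hn, a, e⟩ => ⟨n, hn.trans h, a, e⟩

lemma exists_mem_levelLE (α : Gt A) : ∃ N, α ∈ levelLE N := by
  refine FreeAbelianGroup.induction_on α ⟨0, zero_mem _⟩ (fun ⟨n, a, ha⟩ => ⟨n, ?_⟩)
    (fun _ ⟨N, h⟩ => ⟨N, neg_mem h⟩) fun _ _ ⟨N, h⟩ ⟨M, h'⟩ =>
      ⟨max N M, add_mem (levelLE_mono (le_max_left N M) h) (levelLE_mono (le_max_right N M) h')⟩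
  rw [← gen_of_ne_zero ha]
  exact gen_mem_levelLE le_rfl a

lemma gtFrob_mem_levelLE (hp : p ≠ 0) {N : ℕ} {α : Gt A} (h : α ∈ levelLE (N + 1)) :
    gtFrob p α ∈ levelLE N := by
  suffices levelLE (N + 1) ≤ (levelLE N).comap (gtFrob p) from this h
  refine (AddSubgroup.closure_le _).mpr ?_
  rintro _ ⟨n, hn, a, rfl⟩
  rw [SetLike.mem_coe, AddSubgroup.mem_comap, gtFrob_gen p hp]
  cases n with
  | zero => exact gen_mem_levelLE N.zero_le _
  | succ n => exact nsmul_mem (gen_mem_levelLE (by omega) a) p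

lemma exists_linearCombination_of_mem_levelLE_zero {α : Gt A} (h : α ∈ levelLE 0) :
    ∃ f : A →₀ ℤ, Finsupp.linearCombination ℤ (gen 0) f = α := by
  suffices levelLE 0 ≤
      (LinearMap.range (Finsupp.linearCombination ℤ (gen 0 : A → Gt A))).toAddSubgroup from this h
  refine (AddSubgroup.closure_le _).mpr ?_
  rintro _ ⟨n, hn, a, rfl⟩
  obtain rfl := Nat.le_zero.mp hn
  exact ⟨Finsupp.single a 1, by simp⟩

lemma etaT_linearCombination_gen_zero_apply (hp : p ≠ 0) (f : A →₀ ℤ) (k : ℕ) :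
    etaT p A (Finsupp.linearCombination ℤ (gen 0) f) k = f.sum fun a c => c • a ^ p ^ k := by
  rw [Finsupp.linearCombination_apply, map_finsuppSum]
  simp only [Finsupp.sum, Finset.sum_apply, map_zsmul, Pi.smul_apply, etaT_gen p hp,
    Function.iterate_zero_apply, teich]

end Levels

section Main

variable {A : Type*} [CommRing A] (p : ℕ)

lemma linearCombination_gen_zero_mem_HA (hA : SeparatedByIntPoints A) (hp : 1 < p)
    (hodd : Odd p) (f : A →₀ ℤ) (hf : etaT p A (Finsupp.linearCombination ℤ (gen 0) f) = 0) :
    Finsupp.linearCombination ℤ (gen 0) f ∈ HA p A := by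
  have hp0 : p ≠ 0 := by omega
  set T := f.support ∪ f.support.image Neg.neg
  have hsupp : f.support ⊆ T := Finset.subset_union_left
  have hneg : ∀ a ∈ T, -a ∈ T := by
    simp only [T, Finset.mem_union, Finset.mem_image]
    rintro a (ha | ⟨b, hb, rfl⟩)
    exacts [Or.inr ⟨a, ha, rfl⟩, Or.inl (by rwa [neg_neg])]
  obtain ⟨φ, hφ⟩ := hA (insert 0 T)
  set P := T.filter (fun a => 0 < φ a)
  have hrel : ∀ k, ∑ a ∈ P, (f a - f (-a)) * φ a ^ p ^ k = 0 := by
    intro k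
    have h0 := congrArg φ
      ((etaT_linearCombination_gen_zero_apply p hp0 f k).symm.trans (congrFun hf k))
    rw [Finsupp.sum_of_support_subset f hsupp _ (by simp), map_sum,
      sum_eq_sum_filter_pos_add_neg φ hneg hφ _ (by simp [hp0])] at h0
    simp only [map_zsmul, map_pow, map_neg, hodd.pow.neg_pow, smul_eq_mul, Pi.zero_apply,
      map_zero] at h0
    rw [← h0]
    exact Finset.sum_congr rfl fun a _ => by ring
  have hPT : ↑P ⊆ (↑(insert 0 T) : Set A) :=
    Finset.coe_subset.mpr ((Finset.filter_subset _ T).trans (Finset.subset_insert 0 T))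
  have heven : ∀ a ∈ P, f (-a) = f a := fun a ha =>
    (sub_eq_zero.mp (eq_zero_of_frequently_sum_mul_pow_eq_zero P _ φ (hφ.mono hPT)
      (fun a ha => (Finset.mem_filter.mp ha).2)
      ((tendsto_pow_atTop_atTop_of_one_lt hp).frequently (Frequently.of_forall hrel)) a ha)).symm
  have hsplit :
      Finsupp.linearCombination ℤ (gen 0) f = ∑ a ∈ P, f a • (gen 0 a + gen 0 (-a)) := by
    rw [Finsupp.linearCombination_apply, Finsupp.sum_of_support_subset f hsupp _ (by simp),
      sum_eq_sum_filter_pos_add_neg φ hneg hφ _ (by simp)]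
    exact Finset.sum_congr rfl fun a ha => by rw [heven a ha, smul_add]
  rw [hsplit]
  exact sum_mem fun a _ => zsmul_mem (gen_add_gen_neg_mem p 0 a) _

lemma pow_nsmul_mem_HA_of_mem_levelLE (hA : SeparatedByIntPoints A) (hp : 1 < p) (hodd : Odd p) :
    ∀ N {α : Gt A}, α ∈ levelLE N → etaT p A α = 0 → p ^ N • α ∈ HA p A
  | 0, α, hα, hker => by
    obtain ⟨f, rfl⟩ := exists_linearCombination_of_mem_levelLE_zero hα
    simpa using linearCombination_gen_zero_mem_HA p hA hp hodd f hker
  | N + 1, α, hα, hker => by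
    have := hA.isAddTorsionFree
    have hp0 : p ≠ 0 := by omega
    have hdefect := gtShift_gtFrob_sub_mem p hp0 (congrFun hker 0)
    have hfrob : etaT p A (gtFrob p α) = 0 := by
      refine eq_zero_of_Vmap_eq_zero p hp0 ?_
      rw [← etaT_gtShift p hp0, ← sub_add_cancel (gtShift (gtFrob p α)) (p • α), map_add,
        AddMonoidHom.mem_ker.mp (HA_le_ker p hodd hdefect), map_nsmul, hker, smul_zero, add_zero]
    have ih := pow_nsmul_mem_HA_of_mem_levelLE hA hp hodd N (gtFrob_mem_levelLE p hp0 hα) hfrob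
    have hdecomp : p ^ (N + 1) • α
        = gtShift (p ^ N • gtFrob p α) - p ^ N • (gtShift (gtFrob p α) - p • α) := by
      rw [map_nsmul, smul_sub, sub_sub_cancel, smul_smul, ← pow_succ]
    rw [hdecomp]
    exact sub_mem (gtShift_mem_HA p ih) (nsmul_mem hdefect _)

theorem etaT_eq_zero_iff (hA : SeparatedByIntPoints A) (hp : 1 < p) (hodd : Odd p) (α : Gt A) :
    etaT p A α = 0 ↔ ∃ l : ℕ, p ^ l • α ∈ HA p A := by
  have := hA.isAddTorsionFree
  refine ⟨fun h => ?_, fun ⟨l, hl⟩ => ?_⟩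
  · obtain ⟨N, hN⟩ := exists_mem_levelLE α
    exact ⟨N, pow_nsmul_mem_HA_of_mem_levelLE p hA hp hodd N hN h⟩
  · have h := AddMonoidHom.mem_ker.mp (HA_le_ker p hodd hl)
    rwa [map_nsmul, nsmul_eq_zero_iff_right (pow_ne_zero l (by omega))] at h

end Main

/-- For `p` an odd prime and `A` a polynomial ring over `ℤ`, the kernel of `η̃`
is exactly the `p`-saturation `H̃(A)` of `H(A)`. -/
theorem stmt_15 (p : ℕ) (hp : p.Prime) (hodd : p ≠ 2) (S : Type*) :
    ∀ α : Gt (MvPolynomial S ℤ),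
      etaT p (MvPolynomial S ℤ) α = 0 ↔ ∃ l : ℕ, p ^ l • α ∈ HA p (MvPolynomial S ℤ) :=
  etaT_eq_zero_iff p (MvPolynomial.separatedByIntPoints S) hp.one_lt (hp.odd_of_ne_two hodd)
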